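/- Let α : N^∞ → ℚ be the unique function with α_0 = 1 satisfying Σ_{L+L'=b} (−1)^{‖L‖}·α_L/(L!·L'!·(2|L'|+1)!!) = 0 for every b ≠ 0 in N^∞. Let W be any function assigning a real number W_g(b; D) to each genus g ≥ 0, each b ∈ N^∞ and each finite multiset D of nonnegative integers. Then the following are equivalent. (i) For all g ≥ 0, b ∈ N^∞, d₁ ≥ 0 and finite multisets D = {d_2,…,d_n}: (2d₁+1)!!·W_g(b; {d₁}∪D) = Σ_{j=2}^n Σ_{L+L'=b} α_L·C(b;L)·[(2(|L|+d₁+d_j)−1)!!/(2d_j−1)!!]·W_g(L'; {|L|+d₁+d_j−1}∪(D∖{d_j})) + ½·Σ_{L+L'=b} Σ_{r+s=|L|+d₁−2, r,s≥0} α_L·C(b;L)·(2r+1)!!(2s+1)!!·W_{g−1}(L'; {r,s}∪D) + ½·Σ_{L+e+f=b} Σ_{g'+g''=g} Σ_{I⊔J=D} Σ_{r+s=|L|+d₁−2, r,s≥0} α_L·C(b;L,e,f)·(2r+1)!!(2s+1)!!·W_{g'}(e; {r}∪I)·W_{g''}(f; {s}∪J). (ii) For all g ≥ 0, b ∈ N^∞,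 d₁ ≥ 0 and finite multisets D = {d_2,…,d_n}: Σ_{L+L'=b} (−1)^{‖L‖}·C(b;L)·[(2d₁+2|L|+1)!!/(2|L|+1)!!]·W_g(L'; {d₁+|L|}∪D) = Σ_{j=2}^n [(2(d₁+d_j)−1)!!/(2d_j−1)!!]·W_g(b; {d₁+d_j−1}∪(D∖{d_j})) + ½·Σ_{r+s=d₁−2, r,s≥0} (2r+1)!!(2s+1)!!·W_{g−1}(b; {r,s}∪D) + ½·Σ_{e+f=b} Σ_{g'+g''=g} Σ_{I⊔J=D} Σ_{r+s=d₁−2, r,s≥0} C(b;e)·(2r+1)!!(2s+1)!!·W_{g'}(e; {r}∪I)·W_{g''}(f; {s}∪J). In both identities the sum over j is over the elements of D counted with multiplicity, summands with a τ-index equal to −1 or with genus −1 are omitted, the sum over g'+g''=g is over ordered pairs of nonnegative integers, the sum over I⊔J=D is over ordered pairs of sub-multisets with I+J = D, and sums over decompositions L+L'=b (resp. L+e+f=b, e+f=b) are over ordered pairs (resp. triples) in N^∞. -/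

import Mathlib

/-- `N^∞` is modeled by finitely supported functions `ℕ+ →₀ ℕ`.
`wdeg L = |L| = Σ_{i ≥ 1} i · L(i)`. -/
def wdeg (L : ℕ+ →₀ ℕ) : ℕ := L.sum fun i c => (i : ℕ) * c

/-- `nrm L = ‖L‖ = Σ_{i ≥ 1} L(i)`. -/
def nrm (L : ℕ+ →₀ ℕ) : ℕ := L.sum fun _ c => c

/-- `ffac L = L! = ∏_{i ≥ 1} L(i)!`. -/
def ffac (L : ℕ+ →₀ ℕ) : ℕ := L.prod fun _ c => Nat.factorial c

/-- `chs b L = C(b; L) = ∏_{i ≥ 1} C(b(i), L(i))`, the product of binomial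
coefficients. -/
def chs (b L : ℕ+ →₀ ℕ) : ℕ := ∏ i ∈ b.support, (b i).choose (L i)

/-- `dfac k = (2k+1)!!`; with natural subtraction `dfac (d-1)` realizes `(2d-1)!!`
including the convention `(-1)!! = 1`. -/
def dfac : ℕ → ℕ
  | 0 => 1
  | k + 1 => (2 * k + 3) * dfac k

lemma wdeg_add (x y : ℕ+ →₀ ℕ) : wdeg (x + y) = wdeg x + wdeg y :=
  Finsupp.sum_add_index' (fun _ => by simp) (fun i a b => by ring)

lemma nrm_add (x y : ℕ+ →₀ ℕ) : nrm (x + y) = nrm x + nrm y :=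
  Finsupp.sum_add_index' (fun _ => rfl) (fun _ _ _ => rfl)

@[simp] lemma wdeg_zero : wdeg 0 = 0 := by simp [wdeg]
@[simp] lemma nrm_zero : nrm 0 = 0 := by simp [nrm]
@[simp] lemma ffac_zero : ffac 0 = 1 := by simp [ffac]
@[simp] lemma chs_zero (b : ℕ+ →₀ ℕ) : chs b 0 = 1 := by simp [chs]
@[simp] lemma dfac_zero : dfac 0 = 1 := rfl

lemma dfac_pos (k : ℕ) : 0 < dfac k := by
  induction k with
  | zero => exact one_pos
  | succ n ih => exact Nat.mul_pos (by omega) ih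

lemma ffac_pos (L : ℕ+ →₀ ℕ) : 0 < ffac L :=
  Finset.prod_pos fun i _ => Nat.factorial_pos _

lemma chs_mul (L M : ℕ+ →₀ ℕ) : chs (L + M) L * (ffac L * ffac M) = ffac (L + M) := by
  have hL : L.support ⊆ (L + M).support := by
    intro i hi
    simp only [Finsupp.mem_support_iff, Finsupp.add_apply] at *
    omega
  have hM : M.support ⊆ (L + M).support := by
    intro i hi
    simp only [Finsupp.mem_support_iff, Finsupp.add_apply] at *
    omega
  rw [ffac, ffac, ffac, Finsupp.prod_of_support_subset L hL _ (fun _ _ => rfl),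
    Finsupp.prod_of_support_subset M hM _ (fun _ _ => rfl),
    Finsupp.prod, chs, Finset.prod_mul_distrib.symm, Finset.prod_mul_distrib.symm]
  refine Finset.prod_congr rfl fun i _ => ?_
  have := Nat.choose_mul_factorial_mul_factorial (Nat.le_add_right (L i) (M i))
  simp only [Finsupp.add_apply, Nat.add_sub_cancel_left] at *
  rw [← this]; ring

lemma chs_eq_real {b L M : ℕ+ →₀ ℕ} (h : L + M = b) :
    (chs b L : ℝ) = ffac b / (ffac L * ffac M) := by
  subst h
  have h1 := ffac_pos L
  have h2 := ffac_pos M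
  rw [eq_div_iff (by positivity)]
  exact_mod_cast chs_mul L M

lemma sum_ad_swap (b : ℕ+ →₀ ℕ) (F : (ℕ+ →₀ ℕ) → (ℕ+ →₀ ℕ) → ℝ) :
    ∑ p ∈ Finset.HasAntidiagonal.antidiagonal b, F p.1 p.2 = ∑ p ∈ Finset.HasAntidiagonal.antidiagonal b, F p.2 p.1 := by
  conv_lhs => rw [← Finset.HasAntidiagonal.map_swap_antidiagonal]
  rw [Finset.sum_map]
  simp

lemma sum_ad_ad (b : ℕ+ →₀ ℕ) (F : (ℕ+ →₀ ℕ) → (ℕ+ →₀ ℕ) → (ℕ+ →₀ ℕ) → ℝ) :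
    ∑ p ∈ Finset.HasAntidiagonal.antidiagonal b, ∑ q ∈ Finset.HasAntidiagonal.antidiagonal p.2, F p.1 q.1 q.2 =
    ∑ p ∈ Finset.HasAntidiagonal.antidiagonal b, ∑ q ∈ Finset.HasAntidiagonal.antidiagonal p.1, F q.1 q.2 p.2 := by
  rw [Finset.sum_sigma', Finset.sum_sigma']
  refine Finset.sum_nbij' (fun x => ⟨(x.1.1 + x.2.1, x.2.2), (x.1.1, x.2.1)⟩)
    (fun x => ⟨(x.2.1, x.2.2 + x.1.2), (x.2.2, x.1.2)⟩) ?_ ?_ ?_ ?_ ?_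
  · rintro ⟨⟨L, X⟩, ⟨K, M⟩⟩ h
    simp only [Finset.mem_sigma, Finset.HasAntidiagonal.mem_antidiagonal] at *
    obtain ⟨h1, h2⟩ := h
    constructor
    · rw [← h1, ← h2]; abel
    · trivial
  · rintro ⟨⟨c, M⟩, ⟨L, K⟩⟩ h
    simp only [Finset.mem_sigma, Finset.HasAntidiagonal.mem_antidiagonal] at *
    obtain ⟨h1, h2⟩ := h
    constructor
    · rw [← h1, ← h2]; abel
    · trivial
  · rintro ⟨⟨L, X⟩, ⟨K, M⟩⟩ h
    simp only [Finset.mem_sigma, Finset.HasAntidiagonal.mem_antidiagonal] at h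
    simp [h.2]
  · rintro ⟨⟨c, M⟩, ⟨L, K⟩⟩ h
    simp only [Finset.mem_sigma, Finset.HasAntidiagonal.mem_antidiagonal] at h
    simp [h.2]
  · rintro ⟨⟨L, X⟩, ⟨K, M⟩⟩ h
    rfl

lemma msum_fsum {ι : Type*} (D : Multiset ℕ) (s : Finset ι) (f : ι → ℕ → ℝ) :
    (D.map fun d => ∑ p ∈ s, f p d).sum = ∑ p ∈ s, (D.map fun d => f p d).sum := by
  induction D using Multiset.induction with
  | empty => simp
  | cons a t ih => simp [ih, Finset.sum_add_distrib]

lemma inv_lemma (A B : (ℕ+ →₀ ℕ) → ℝ)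
    (h0 : A 0 * B 0 = 1)
    (hAB : ∀ c : ℕ+ →₀ ℕ, c ≠ 0 →
      ∑ p ∈ Finset.HasAntidiagonal.antidiagonal c, A p.1 * B p.2 / ((ffac p.1 : ℝ) * (ffac p.2)) = 0)
    (f : ℕ → (ℕ+ →₀ ℕ) → ℝ) (d : ℕ) (b : ℕ+ →₀ ℕ) :
    (∑ p ∈ Finset.HasAntidiagonal.antidiagonal b, A p.1 * chs b p.1 *
      ∑ q ∈ Finset.HasAntidiagonal.antidiagonal p.2, B q.1 * chs p.2 q.1 * f (d + wdeg p.1 + wdeg q.1) q.2)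
    = f d b := by
  have key : (∑ p ∈ Finset.HasAntidiagonal.antidiagonal b, A p.1 * chs b p.1 *
      ∑ q ∈ Finset.HasAntidiagonal.antidiagonal p.2, B q.1 * chs p.2 q.1 * f (d + wdeg p.1 + wdeg q.1) q.2)
      = ∑ p ∈ Finset.HasAntidiagonal.antidiagonal b, ∑ q ∈ Finset.HasAntidiagonal.antidiagonal p.2,
          A p.1 * B q.1 * ((ffac b : ℝ) / ((ffac p.1) * (ffac q.1) * (ffac q.2))) *
            f (d + wdeg p.1 + wdeg q.1) q.2 := by
    refine Finset.sum_congr rfl fun p hp => ?_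
    rw [Finset.mul_sum]
    refine Finset.sum_congr rfl fun q hq => ?_
    rw [Finset.HasAntidiagonal.mem_antidiagonal] at hp hq
    rw [chs_eq_real hp, chs_eq_real hq]
    have h1 := ffac_pos p.1; have h2 := ffac_pos p.2
    have h3 := ffac_pos q.1; have h4 := ffac_pos q.2
    have h2' : (ffac p.2 : ℝ) ≠ 0 := by positivity
    field_simp
  rw [key,
    sum_ad_ad b (fun L K M => A L * B K * ((ffac b : ℝ) / ((ffac L) * (ffac K) * (ffac M))) *
      f (d + wdeg L + wdeg K) M)]
  rw [Finset.sum_eq_single_of_mem ((0 : ℕ+ →₀ ℕ), b) (by simp)]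
  · rw [Finsupp.antidiagonal_zero, Finset.sum_singleton]
    have hb := ffac_pos b
    have hb' : (ffac b : ℝ) ≠ 0 := by positivity
    simp only [ffac_zero, wdeg_zero, Nat.cast_one, one_mul, mul_one, add_zero]
    rw [div_self hb']
    rw [show A (0:ℕ+ →₀ ℕ) * B 0 * 1 * f d b = (A 0 * B 0) * f d b by ring, h0, one_mul]
  · rintro ⟨c, M⟩ hp hne
    rw [Finset.HasAntidiagonal.mem_antidiagonal] at hp
    have hc : c ≠ 0 := by
      rintro rfl
      exact hne (by rw [← hp, zero_add])
    have step : ∀ q ∈ Finset.HasAntidiagonal.antidiagonal c,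
        A q.1 * B q.2 * ((ffac b : ℝ) / ((ffac q.1) * (ffac q.2) * (ffac M))) *
          f (d + wdeg q.1 + wdeg q.2) M
        = ((ffac b : ℝ) / (ffac M) * f (d + wdeg c) M) *
            (A q.1 * B q.2 / ((ffac q.1 : ℝ) * (ffac q.2))) := by
      intro q hq
      rw [Finset.HasAntidiagonal.mem_antidiagonal] at hq
      have hw : wdeg q.1 + wdeg q.2 = wdeg c := by rw [← hq, wdeg_add]
      rw [show d + wdeg q.1 + wdeg q.2 = d + wdeg c by omega]
      have h3 := ffac_pos q.1; have h4 := ffac_pos q.2; have h5 := ffac_pos M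
      field_simp
    rw [Finset.sum_congr rfl step, ← Finset.mul_sum, hAB c hc, mul_zero]

noncomputable def RHS2 (W : ℕ → (ℕ+ →₀ ℕ) → Multiset ℕ → ℝ) (g : ℕ) (b : ℕ+ →₀ ℕ)
    (d₁ : ℕ) (D : Multiset ℕ) : ℝ :=
  (D.map fun d =>
    if 1 ≤ d₁ + d then
      (dfac (d₁ + d - 1) : ℝ) / (dfac (d - 1)) * W g b ((d₁ + d - 1) ::ₘ D.erase d)
    else 0).sum
  + (1 / 2) *
    (if 2 ≤ d₁ ∧ 1 ≤ g then
      ∑ rs ∈ Finset.HasAntidiagonal.antidiagonal (d₁ - 2),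
        (dfac rs.1 : ℝ) * (dfac rs.2) * W (g - 1) b (rs.1 ::ₘ rs.2 ::ₘ D)
    else 0)
  + (1 / 2) *
    (if 2 ≤ d₁ then
      ∑ q ∈ Finset.HasAntidiagonal.antidiagonal b,
        ∑ gg ∈ Finset.HasAntidiagonal.antidiagonal g,
          ((D.powerset).map fun I =>
            ∑ rs ∈ Finset.HasAntidiagonal.antidiagonal (d₁ - 2),
              (chs b q.1 : ℝ) * ((dfac rs.1 : ℝ) * (dfac rs.2)) *
                W gg.1 q.1 (rs.1 ::ₘ I) * W gg.2 q.2 (rs.2 ::ₘ (D - I))).sum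
    else 0)

lemma rhs1_eq (α : (ℕ+ →₀ ℕ) → ℚ) (W : ℕ → (ℕ+ →₀ ℕ) → Multiset ℕ → ℝ)
    (g : ℕ) (b : ℕ+ →₀ ℕ) (d₁ : ℕ) (D : Multiset ℕ) :
    ((D.map fun d =>
          ∑ p ∈ Finset.HasAntidiagonal.antidiagonal b,
            if 1 ≤ wdeg p.1 + d₁ + d then
              (α p.1 : ℝ) * (chs b p.1) *
                ((dfac (wdeg p.1 + d₁ + d - 1) : ℝ) / (dfac (d - 1))) *
                W g p.2 ((wdeg p.1 + d₁ + d - 1) ::ₘ D.erase d)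
            else 0).sum
        + (1 / 2) * (∑ p ∈ Finset.HasAntidiagonal.antidiagonal b,
            if 2 ≤ wdeg p.1 + d₁ ∧ 1 ≤ g then
              ∑ rs ∈ Finset.HasAntidiagonal.antidiagonal (wdeg p.1 + d₁ - 2),
                (α p.1 : ℝ) * (chs b p.1) * ((dfac rs.1 : ℝ) * (dfac rs.2)) *
                  W (g - 1) p.2 (rs.1 ::ₘ rs.2 ::ₘ D)
            else 0)
        + (1 / 2) * (∑ p ∈ Finset.HasAntidiagonal.antidiagonal b,
            ∑ q ∈ Finset.HasAntidiagonal.antidiagonal p.2,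
              if 2 ≤ wdeg p.1 + d₁ then
                ∑ gg ∈ Finset.HasAntidiagonal.antidiagonal g,
                  ((D.powerset).map fun I =>
                    ∑ rs ∈ Finset.HasAntidiagonal.antidiagonal (wdeg p.1 + d₁ - 2),
                      (α p.1 : ℝ) *
                        ((ffac b : ℝ) / ((ffac p.1) * (ffac q.1) * (ffac q.2))) *
                        ((dfac rs.1 : ℝ) * (dfac rs.2)) *
                        W gg.1 q.1 (rs.1 ::ₘ I) * W gg.2 q.2 (rs.2 ::ₘ (D - I))).sum
              else 0))
    = ∑ p ∈ Finset.HasAntidiagonal.antidiagonal b,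
        (α p.1 : ℝ) * (chs b p.1) * RHS2 W g p.2 (wdeg p.1 + d₁) D := by
  have per_p : ∀ p ∈ Finset.HasAntidiagonal.antidiagonal b,
      (α p.1 : ℝ) * (chs b p.1) * RHS2 W g p.2 (wdeg p.1 + d₁) D
      = (D.map fun d =>
            if 1 ≤ wdeg p.1 + d₁ + d then
              (α p.1 : ℝ) * (chs b p.1) *
                ((dfac (wdeg p.1 + d₁ + d - 1) : ℝ) / (dfac (d - 1))) *
                W g p.2 ((wdeg p.1 + d₁ + d - 1) ::ₘ D.erase d)
            else 0).sum
        + (1 / 2) * (if 2 ≤ wdeg p.1 + d₁ ∧ 1 ≤ g then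
              ∑ rs ∈ Finset.HasAntidiagonal.antidiagonal (wdeg p.1 + d₁ - 2),
                (α p.1 : ℝ) * (chs b p.1) * ((dfac rs.1 : ℝ) * (dfac rs.2)) *
                  W (g - 1) p.2 (rs.1 ::ₘ rs.2 ::ₘ D)
            else 0)
        + (1 / 2) * (∑ q ∈ Finset.HasAntidiagonal.antidiagonal p.2,
              if 2 ≤ wdeg p.1 + d₁ then
                ∑ gg ∈ Finset.HasAntidiagonal.antidiagonal g,
                  ((D.powerset).map fun I =>
                    ∑ rs ∈ Finset.HasAntidiagonal.antidiagonal (wdeg p.1 + d₁ - 2),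
                      (α p.1 : ℝ) *
                        ((ffac b : ℝ) / ((ffac p.1) * (ffac q.1) * (ffac q.2))) *
                        ((dfac rs.1 : ℝ) * (dfac rs.2)) *
                        W gg.1 q.1 (rs.1 ::ₘ I) * W gg.2 q.2 (rs.2 ::ₘ (D - I))).sum
              else 0) := by
    intro p hp
    rw [Finset.HasAntidiagonal.mem_antidiagonal] at hp
    have hsw : ∀ (x y : ℝ), y * ((1:ℝ)/2 * x) = 1/2 * (y * x) := fun x y => by ring
    rw [RHS2, mul_add, mul_add]
    congr 1
    · congr 1
      -- term 1
      · rw [← Multiset.sum_map_mul_left]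
        refine congrArg Multiset.sum (Multiset.map_congr rfl fun d _ => ?_)
        split_ifs with h
        · ring
        · simp
      -- term 2
      · rw [hsw]
        congr 1
        split_ifs with h
        · rw [Finset.mul_sum]
          exact Finset.sum_congr rfl fun rs _ => by ring
        · simp
    -- term 3
    · rw [hsw]
      congr 1
      split_ifs with h
      · rw [Finset.mul_sum]
        refine Finset.sum_congr rfl fun q hq => ?_
        rw [Finset.HasAntidiagonal.mem_antidiagonal] at hq
        rw [Finset.mul_sum]
        refine Finset.sum_congr rfl fun gg _ => ?_
        rw [← Multiset.sum_map_mul_left]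
        refine congrArg Multiset.sum (Multiset.map_congr rfl fun I _ => ?_)
        rw [Finset.mul_sum]
        refine Finset.sum_congr rfl fun rs _ => ?_
        rw [chs_eq_real hp, chs_eq_real hq]
        have h1 := ffac_pos p.1; have h2 := ffac_pos p.2
        have h3 := ffac_pos q.1; have h4 := ffac_pos q.2
        have h2' : (ffac p.2 : ℝ) ≠ 0 := by positivity
        field_simp
      · simp
  rw [Finset.sum_congr rfl per_p, Finset.sum_add_distrib, Finset.sum_add_distrib,
    ← msum_fsum, ← Finset.mul_sum, ← Finset.mul_sum]

/-- **Theorems 3.3 and 3.4 are equivalent**: let `α : N^∞ → ℚ` be the unique function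
with `α₀ = 1` satisfying `Σ_{L+L'=b} (-1)^‖L‖ α_L/(L! L'! (2|L'|+1)!!) = 0` for `b ≠ 0`,
and let `W g b D` model the mixed intersection numbers `⟨κ(b) ∏_{d ∈ D} τ_d⟩_g`.  Then
the generalized Mirzakhani recursion with constants `α` (Theorem 3.3) holds for `W`
if and only if the recursion of Theorem 3.4 holds for `W`.  Summands with a `τ`-index
equal to `-1` or with genus `-1` are omitted. -/
theorem higher_recursion_equiv (α : (ℕ+ →₀ ℕ) → ℚ)
    (hα0 : α 0 = 1)
    (hα : ∀ b : ℕ+ →₀ ℕ, b ≠ 0 →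
      ∑ p ∈ Finset.HasAntidiagonal.antidiagonal b,
        (-1 : ℚ) ^ (nrm p.1) * α p.1 /
          ((ffac p.1) * (ffac p.2) * (dfac (wdeg p.2))) = 0)
    (W : ℕ → (ℕ+ →₀ ℕ) → Multiset ℕ → ℝ) :
    (∀ (g : ℕ) (b : ℕ+ →₀ ℕ) (d₁ : ℕ) (D : Multiset ℕ),
      (dfac d₁ : ℝ) * W g b (d₁ ::ₘ D) =
        (D.map fun d =>
          ∑ p ∈ Finset.HasAntidiagonal.antidiagonal b,
            if 1 ≤ wdeg p.1 + d₁ + d then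
              (α p.1 : ℝ) * (chs b p.1) *
                ((dfac (wdeg p.1 + d₁ + d - 1) : ℝ) / (dfac (d - 1))) *
                W g p.2 ((wdeg p.1 + d₁ + d - 1) ::ₘ D.erase d)
            else 0).sum
        + (1 / 2) * (∑ p ∈ Finset.HasAntidiagonal.antidiagonal b,
            if 2 ≤ wdeg p.1 + d₁ ∧ 1 ≤ g then
              ∑ rs ∈ Finset.HasAntidiagonal.antidiagonal (wdeg p.1 + d₁ - 2),
                (α p.1 : ℝ) * (chs b p.1) * ((dfac rs.1 : ℝ) * (dfac rs.2)) *
                  W (g - 1) p.2 (rs.1 ::ₘ rs.2 ::ₘ D)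
            else 0)
        + (1 / 2) * (∑ p ∈ Finset.HasAntidiagonal.antidiagonal b,
            ∑ q ∈ Finset.HasAntidiagonal.antidiagonal p.2,
              if 2 ≤ wdeg p.1 + d₁ then
                ∑ gg ∈ Finset.HasAntidiagonal.antidiagonal g,
                  ((D.powerset).map fun I =>
                    ∑ rs ∈ Finset.HasAntidiagonal.antidiagonal (wdeg p.1 + d₁ - 2),
                      (α p.1 : ℝ) *
                        ((ffac b : ℝ) / ((ffac p.1) * (ffac q.1) * (ffac q.2))) *
                        ((dfac rs.1 : ℝ) * (dfac rs.2)) *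
                        W gg.1 q.1 (rs.1 ::ₘ I) * W gg.2 q.2 (rs.2 ::ₘ (D - I))).sum
              else 0)) ↔
    (∀ (g : ℕ) (b : ℕ+ →₀ ℕ) (d₁ : ℕ) (D : Multiset ℕ),
      (∑ p ∈ Finset.HasAntidiagonal.antidiagonal b,
          (-1 : ℝ) ^ (nrm p.1) * (chs b p.1) *
            ((dfac (d₁ + wdeg p.1) : ℝ) / (dfac (wdeg p.1))) *
            W g p.2 ((d₁ + wdeg p.1) ::ₘ D)) =
        (D.map fun d =>
          if 1 ≤ d₁ + d then
            (dfac (d₁ + d - 1) : ℝ) / (dfac (d - 1)) * W g b ((d₁ + d - 1) ::ₘ D.erase d)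
          else 0).sum
        + (1 / 2) *
          (if 2 ≤ d₁ ∧ 1 ≤ g then
            ∑ rs ∈ Finset.HasAntidiagonal.antidiagonal (d₁ - 2),
              (dfac rs.1 : ℝ) * (dfac rs.2) * W (g - 1) b (rs.1 ::ₘ rs.2 ::ₘ D)
          else 0)
        + (1 / 2) *
          (if 2 ≤ d₁ then
            ∑ q ∈ Finset.HasAntidiagonal.antidiagonal b,
              ∑ gg ∈ Finset.HasAntidiagonal.antidiagonal g,
                ((D.powerset).map fun I =>
                  ∑ rs ∈ Finset.HasAntidiagonal.antidiagonal (d₁ - 2),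
                    (chs b q.1 : ℝ) * ((dfac rs.1 : ℝ) * (dfac rs.2)) *
                      W gg.1 q.1 (rs.1 ::ₘ I) * W gg.2 q.2 (rs.2 ::ₘ (D - I))).sum
          else 0)) := by
  -- real-valued version of the `α` relation
  have hαR : ∀ c : ℕ+ →₀ ℕ, c ≠ 0 →
      ∑ p ∈ Finset.HasAntidiagonal.antidiagonal c,
        (-1 : ℝ) ^ (nrm p.1) * (α p.1 : ℝ) /
          ((ffac p.1 : ℝ) * (ffac p.2) * (dfac (wdeg p.2))) = 0 := by
    intro c hc
    have h := hα c hc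
    have h2 : ((∑ p ∈ Finset.HasAntidiagonal.antidiagonal c,
        (-1 : ℚ) ^ (nrm p.1) * α p.1 /
          ((ffac p.1) * (ffac p.2) * (dfac (wdeg p.2))) : ℚ) : ℝ) = 0 := by
      rw [h]; norm_num
    rw [← h2]
    push_cast
    rfl
  -- sign-flipped version
  have hαR' : ∀ c : ℕ+ →₀ ℕ, c ≠ 0 →
      ∑ p ∈ Finset.HasAntidiagonal.antidiagonal c,
        (-1 : ℝ) ^ (nrm p.2) * (α p.1 : ℝ) /
          ((ffac p.1 : ℝ) * (ffac p.2) * (dfac (wdeg p.2))) = 0 := by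
    intro c hc
    have key : ∀ p ∈ Finset.HasAntidiagonal.antidiagonal c,
        (-1 : ℝ) ^ (nrm p.2) * (α p.1 : ℝ) /
          ((ffac p.1 : ℝ) * (ffac p.2) * (dfac (wdeg p.2)))
        = (-1 : ℝ) ^ (nrm c) * ((-1 : ℝ) ^ (nrm p.1) * (α p.1 : ℝ) /
            ((ffac p.1 : ℝ) * (ffac p.2) * (dfac (wdeg p.2)))) := by
      intro p hp
      rw [Finset.HasAntidiagonal.mem_antidiagonal] at hp
      have hn : nrm c = nrm p.1 + nrm p.2 := by rw [← hp, nrm_add]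
      have h2 : ((-1 : ℝ)) ^ (nrm p.1) * (-1 : ℝ) ^ (nrm p.1) = 1 := by
        rw [← pow_add, ← two_mul, pow_mul]; norm_num
      have h3 : ((-1 : ℝ)) ^ (nrm p.2) = (-1 : ℝ) ^ (nrm c) * (-1 : ℝ) ^ (nrm p.1) := by
        rw [hn, pow_add, mul_comm ((-1 : ℝ) ^ (nrm p.1)) _, mul_assoc, h2, mul_one]
      rw [h3]; ring
    rw [Finset.sum_congr rfl key, ← Finset.mul_sum, hαR c hc, mul_zero]
  have h0AB : ((fun L => (-1 : ℝ) ^ (nrm L) / dfac (wdeg L)) (0 : ℕ+ →₀ ℕ)) *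
      ((fun L => (α L : ℝ)) (0 : ℕ+ →₀ ℕ)) = 1 := by
    simp [hα0]
  have h0BA : ((fun L => (α L : ℝ)) (0 : ℕ+ →₀ ℕ)) *
      ((fun L => (-1 : ℝ) ^ (nrm L) / dfac (wdeg L)) (0 : ℕ+ →₀ ℕ)) = 1 := by
    simp [hα0]
  have hAB : ∀ c : ℕ+ →₀ ℕ, c ≠ 0 →
      ∑ p ∈ Finset.HasAntidiagonal.antidiagonal c,
        ((fun L => (-1 : ℝ) ^ (nrm L) / dfac (wdeg L)) p.1) * ((fun L => (α L : ℝ)) p.2) /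
          ((ffac p.1 : ℝ) * (ffac p.2)) = 0 := by
    intro c hc
    rw [sum_ad_swap c (fun x y => ((-1 : ℝ) ^ (nrm x) / dfac (wdeg x)) * (α y : ℝ) /
      ((ffac x : ℝ) * (ffac y)))]
    rw [← hαR' c hc]
    exact Finset.sum_congr rfl fun p _ => by ring
  have hBA : ∀ c : ℕ+ →₀ ℕ, c ≠ 0 →
      ∑ p ∈ Finset.HasAntidiagonal.antidiagonal c,
        ((fun L => (α L : ℝ)) p.1) * ((fun L => (-1 : ℝ) ^ (nrm L) / dfac (wdeg L)) p.2) /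
          ((ffac p.1 : ℝ) * (ffac p.2)) = 0 := by
    intro c hc
    rw [← hαR' c hc]
    exact Finset.sum_congr rfl fun p _ => by ring
  constructor
  · -- (i) → (ii)
    intro H g b d₁ D
    show _ = RHS2 W g b d₁ D
    have hstep : ∀ p ∈ Finset.HasAntidiagonal.antidiagonal b,
        (-1 : ℝ) ^ (nrm p.1) * (chs b p.1) *
            ((dfac (d₁ + wdeg p.1) : ℝ) / (dfac (wdeg p.1))) *
            W g p.2 ((d₁ + wdeg p.1) ::ₘ D)
        = ((-1 : ℝ) ^ (nrm p.1) / dfac (wdeg p.1)) * (chs b p.1) *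
            ∑ q ∈ Finset.HasAntidiagonal.antidiagonal p.2,
              (α q.1 : ℝ) * (chs p.2 q.1) * RHS2 W g q.2 (d₁ + wdeg p.1 + wdeg q.1) D := by
      intro p hp
      have H1 := H g p.2 (d₁ + wdeg p.1) D
      rw [rhs1_eq α W g p.2 (d₁ + wdeg p.1) D] at H1
      have H2 : (dfac (d₁ + wdeg p.1) : ℝ) * W g p.2 ((d₁ + wdeg p.1) ::ₘ D)
          = ∑ q ∈ Finset.HasAntidiagonal.antidiagonal p.2,
              (α q.1 : ℝ) * (chs p.2 q.1) * RHS2 W g q.2 (d₁ + wdeg p.1 + wdeg q.1) D := by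
        rw [H1]
        exact Finset.sum_congr rfl fun q _ => by
          rw [show wdeg q.1 + (d₁ + wdeg p.1) = d₁ + wdeg p.1 + wdeg q.1 by omega]
      calc (-1 : ℝ) ^ (nrm p.1) * (chs b p.1) *
            ((dfac (d₁ + wdeg p.1) : ℝ) / (dfac (wdeg p.1))) *
            W g p.2 ((d₁ + wdeg p.1) ::ₘ D)
          = ((-1 : ℝ) ^ (nrm p.1) / dfac (wdeg p.1)) * (chs b p.1) *
              ((dfac (d₁ + wdeg p.1) : ℝ) * W g p.2 ((d₁ + wdeg p.1) ::ₘ D)) := by ring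
        _ = _ := by rw [H2]
    rw [Finset.sum_congr rfl hstep]
    exact inv_lemma (fun L => (-1 : ℝ) ^ (nrm L) / dfac (wdeg L)) (fun L => (α L : ℝ))
      h0AB hAB (fun e M => RHS2 W g M e D) d₁ b
  · -- (ii) → (i)
    intro H g b d₁ D
    rw [rhs1_eq α W g b d₁ D]
    have hstep : ∀ p ∈ Finset.HasAntidiagonal.antidiagonal b,
        (α p.1 : ℝ) * (chs b p.1) * RHS2 W g p.2 (wdeg p.1 + d₁) D
        = (α p.1 : ℝ) * (chs b p.1) *
            ∑ q ∈ Finset.HasAntidiagonal.antidiagonal p.2,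
              ((-1 : ℝ) ^ (nrm q.1) / dfac (wdeg q.1)) * (chs p.2 q.1) *
                ((dfac (d₁ + wdeg p.1 + wdeg q.1) : ℝ) *
                  W g q.2 ((d₁ + wdeg p.1 + wdeg q.1) ::ₘ D)) := by
      intro p hp
      congr 1
      have H' : RHS2 W g p.2 (wdeg p.1 + d₁) D
          = ∑ q ∈ Finset.HasAntidiagonal.antidiagonal p.2,
              (-1 : ℝ) ^ (nrm q.1) * (chs p.2 q.1) *
                ((dfac (wdeg p.1 + d₁ + wdeg q.1) : ℝ) / (dfac (wdeg q.1))) *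
                W g q.2 ((wdeg p.1 + d₁ + wdeg q.1) ::ₘ D) := (H g p.2 (wdeg p.1 + d₁) D).symm
      rw [H']
      refine Finset.sum_congr rfl fun q _ => ?_
      rw [show wdeg p.1 + d₁ + wdeg q.1 = d₁ + wdeg p.1 + wdeg q.1 by omega]
      ring
    rw [Finset.sum_congr rfl hstep]
    exact (inv_lemma (fun L => (α L : ℝ)) (fun L => (-1 : ℝ) ^ (nrm L) / dfac (wdeg L))
      h0BA hBA (fun e M => (dfac e : ℝ) * W g M (e ::ₘ D)) d₁ b).symm
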